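/- Let N be a semidirected acyclic L-network (not necessarily binary) and T a root component of N with nonempty set of admissible edges adm(T). For an edge e = uv in adm(T) with u in T, the vector whose i-th coordinate is m(v,i;e) + m(u,i;e) (number of semidirected paths from v, respectively u, to leaf i that avoid e), for i ranging over all leaf labels, does not depend on the choice of e in adm(T). -/

import Mathlib

open scoped Classical

noncomputable section

/-! ## Tags, μ-vectors, cherry types -/

inductive Tag : Type
  | te | hy | rn | ie
deriving DecidableEq, Inhabited

/-- The four cherry types (r2), (r3), (d), (u). -/
inductive CT : Type
  | r2 | r3 | d | u
deriving DecidableEq, Inhabited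

/-- The eight cherry kinds: tree/reticulate combined with the four types. -/
inductive CherryKind : Type
  | Tr2 | Tr3 | Td | Tu | Rr2 | Rr3 | Rd | Ru
deriving DecidableEq, Inhabited

def CherryKind.isTree : CherryKind → Bool
  | .Tr2 | .Tr3 | .Td | .Tu => true
  | _ => false

def CherryKind.ct : CherryKind → CT
  | .Tr2 => .r2 | .Tr3 => .r3 | .Td => .d | .Tu => .u
  | .Rr2 => .r2 | .Rr3 => .r3 | .Rd => .d | .Ru => .u

/-- A simple μ-vector on `n` taxa: coordinate 0 counts paths to hybrid nodes,
coordinate `i.succ` counts paths to the leaf labelled `i`. -/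
abbrev MuVec (n : ℕ) := Fin (n + 1) → ℕ

/-- A μ-entry: a multiset of (one or two) tagged simple μ-vectors. -/
abbrev MuEntry (n : ℕ) := Multiset (MuVec n × Tag)

/-- An edge-based μ-representation: a multiset of μ-entries. -/
abbrev MuRep (n : ℕ) := Multiset (MuEntry n)

/-- Indicator μ-vector `δ_S`. -/
def dlt {n : ℕ} (s : Finset (Fin (n + 1))) : MuVec n := fun i => if i ∈ s then 1 else 0

/-! ## Semidirected multigraphs with labelled leaves -/

/-- A semidirected multigraph on vertex names `ℕ` and edge names `ℕ`;
`dir e = true` means `e` is directed from `tail e` to `head e`;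
`dir e = false` means `e` is an undirected edge with endpoints `tail e`, `head e`.
Leaves may be labelled by taxa in `Fin n`. -/
structure Net (n : ℕ) where
  V : Finset ℕ
  E : Finset ℕ
  tail : ℕ → ℕ
  head : ℕ → ℕ
  dir : ℕ → Bool
  lbl : ℕ → Option (Fin n)

namespace Net

variable {n : ℕ}

def indeg (N : Net n) (v : ℕ) : ℕ :=
  (N.E.filter (fun e => N.dir e = true ∧ N.head e = v)).card
def outdeg (N : Net n) (v : ℕ) : ℕ :=
  (N.E.filter (fun e => N.dir e = true ∧ N.tail e = v)).card
def undeg (N : Net n) (v : ℕ) : ℕ :=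
  (N.E.filter (fun e => N.dir e = false ∧ (N.tail e = v ∨ N.head e = v))).card
def deg (N : Net n) (v : ℕ) : ℕ := N.indeg v + N.outdeg v + N.undeg v

def IsRootNode (N : Net n) (v : ℕ) : Prop := v ∈ N.V ∧ N.indeg v = 0 ∧ N.undeg v = 0
def IsLeafNode (N : Net n) (v : ℕ) : Prop := v ∈ N.V ∧ N.outdeg v = 0 ∧ N.undeg v = 0
def IsHybrid (N : Net n) (v : ℕ) : Prop := 2 ≤ N.indeg v
def IsTreeNode (N : Net n) (v : ℕ) : Prop := N.indeg v ≤ 1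

/-- Source of a step `(e, forward?)` of a semidirected walk. -/
def src (N : Net n) (s : ℕ × Bool) : ℕ := if s.2 then N.tail s.1 else N.head s.1
/-- Destination of a step. -/
def dst (N : Net n) (s : ℕ × Bool) : ℕ := if s.2 then N.head s.1 else N.tail s.1

/-- A step is legal from `u`: the edge is in the graph, directed edges are
traversed forwards, and the step starts at `u`. -/
def stepOK (N : Net n) (u : ℕ) (s : ℕ × Bool) : Prop :=
  s.1 ∈ N.E ∧ (N.dir s.1 = true → s.2 = true) ∧ N.src s = u

/-- `chain N u p x`: `p` is a semidirected walk from `u` to `x`. -/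
def chain (N : Net n) : ℕ → List (ℕ × Bool) → ℕ → Prop
  | u, [], x => u = x
  | u, s :: p, x => N.stepOK u s ∧ N.chain (N.dst s) p x

/-- A semidirected path (walk without repeated vertices) from `u` to `x`. -/
def IsPath (N : Net n) (u x : ℕ) (p : List (ℕ × Bool)) : Prop :=
  u ∈ N.V ∧ N.chain u p x ∧ (u :: p.map N.dst).Nodup

def paths (N : Net n) (u x : ℕ) : Set (List (ℕ × Bool)) := {p | N.IsPath u x p}
def pathsAvoid (N : Net n) (u x : ℕ) (e : ℕ) : Set (List (ℕ × Bool)) :=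
  {p | N.IsPath u x p ∧ e ∉ p.map Prod.fst}

/-- `m N u x` : the number of semidirected paths from `u` to `x`. -/
def m (N : Net n) (u x : ℕ) : ℕ := (N.paths u x).ncard
/-- `mAvoid N u x e` : the number of semidirected paths from `u` to `x` avoiding `e`. -/
def mAvoid (N : Net n) (u x : ℕ) (e : ℕ) : ℕ := (N.pathsAvoid u x e).ncard

/-- One undirected edge joins `u` and `v`. -/
def ustep (N : Net n) (u v : ℕ) : Prop :=
  ∃ e ∈ N.E, N.dir e = false ∧
    ((N.tail e = u ∧ N.head e = v) ∨ (N.tail e = v ∧ N.head e = u))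

/-- `u ~ v`: joined by a path consisting solely of undirected edges. -/
def UndirConn (N : Net n) : ℕ → ℕ → Prop := Relation.ReflTransGen N.ustep

/-- A semidirected cycle. -/
def IsSDCycle (N : Net n) (p : List (ℕ × Bool)) : Prop :=
  ∃ u, p ≠ [] ∧ N.chain u p u ∧ (p.map N.dst).Nodup ∧ (p.map Prod.fst).Nodup

def Acyclic (N : Net n) : Prop := ∀ p, ¬ N.IsSDCycle p

/-- `x` is the leaf labelled `a`. -/
def HasLeaf (N : Net n) (a : Fin n) (x : ℕ) : Prop := x ∈ N.V ∧ N.lbl x = some a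

/-- `N` is an `L`-network: a semidirected acyclic graph whose leaves are tree
nodes, with leaves injectively labelled. -/
structure IsLNetwork (N : Net n) : Prop where
  wfT : ∀ e ∈ N.E, N.tail e ∈ N.V
  wfH : ∀ e ∈ N.E, N.head e ∈ N.V
  acyclic : N.Acyclic
  leavesTree : ∀ v, N.IsLeafNode v → N.IsTreeNode v
  lblV : ∀ v, v ∉ N.V → N.lbl v = none
  lblLeaf : ∀ v ∈ N.V, ((N.lbl v).isSome ↔ N.IsLeafNode v)
  lblInj : ∀ v ∈ N.V, ∀ w ∈ N.V, N.lbl v ≠ none → N.lbl v = N.lbl w → v = w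

/-- Binary: roots of degree 0, 2 or 3; leaves of degree 0 or 1; other nodes of degree 3. -/
def IsBinary (N : Net n) : Prop :=
  ∀ v ∈ N.V,
    (N.IsRootNode v → N.deg v = 0 ∨ N.deg v = 2 ∨ N.deg v = 3) ∧
    (N.IsLeafNode v → N.deg v = 0 ∨ N.deg v = 1) ∧
    (¬ N.IsRootNode v → ¬ N.IsLeafNode v → N.deg v = 3)

/-- The class of `v` under `~` is a singleton. -/
def TrivialClass (N : Net n) (v : ℕ) : Prop := ∀ w, N.UndirConn v w → w = v

/-- Complete: edges incident to leaves are directed (toward the leaves), and every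
nontrivial class under `~` has in-degree 0 in the contraction `N/~`. -/
def IsComplete (N : Net n) : Prop :=
  (∀ e ∈ N.E, N.dir e = false → ¬ N.IsLeafNode (N.tail e) ∧ ¬ N.IsLeafNode (N.head e)) ∧
  (∀ v ∈ N.V, ¬ N.TrivialClass v → ∀ e ∈ N.E, N.dir e = true → ¬ N.UndirConn (N.head e) v)

/-- The class `[v]` is a root of the contraction `N/~`: no directed edge points into it. -/
def IsRootClass (N : Net n) (v : ℕ) : Prop :=
  v ∈ N.V ∧ ∀ e ∈ N.E, N.dir e = true → ¬ N.UndirConn (N.head e) v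

/-- `v` belongs to an unresolved root component. -/
def UnresolvedRC (N : Net n) (v : ℕ) : Prop :=
  N.IsRootClass v ∧ (¬ N.TrivialClass v ∨ N.deg v = 3)

/-- `e` belongs to the admissible edge set of the root component of `v0`. -/
def AdmFor (N : Net n) (v0 e : ℕ) : Prop := e ∈ N.E ∧ N.UndirConn (N.tail e) v0

/-! ## μ-representation of a network -/

def Hybs (N : Net n) : Finset ℕ := N.V.filter (fun v => N.IsHybrid v)

def mToLbl (N : Net n) (v : ℕ) (a : Fin n) : ℕ :=
  ∑ x ∈ N.V.filter (fun x => N.lbl x = some a), N.m v x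
def mToLblAvoid (N : Net n) (v : ℕ) (a : Fin n) (e : ℕ) : ℕ :=
  ∑ x ∈ N.V.filter (fun x => N.lbl x = some a), N.mAvoid v x e

/-- Numbers of paths from `v` to hybrids (coordinate 0) and to each leaf. -/
def muFrom (N : Net n) (v : ℕ) : MuVec n :=
  fun i => Fin.cases (∑ h ∈ N.Hybs, N.m v h) (fun a => N.mToLbl v a) i

/-- Numbers of paths from `v` avoiding edge `e`. -/
def muAt (N : Net n) (e : ℕ) (v : ℕ) : MuVec n :=
  fun i => Fin.cases (∑ h ∈ N.Hybs, N.mAvoid v h e) (fun a => N.mToLblAvoid v a e) i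

/-- The μ-entry of an edge. -/
def muEntryEdge (N : Net n) (e : ℕ) : MuEntry n :=
  if N.dir e = true then
    let t : Tag := if N.IsHybrid (N.head e) then Tag.hy else Tag.te
    if N.UnresolvedRC (N.tail e) then
      ({(N.muAt e (N.head e), t),
        (fun i => N.muFrom (N.tail e) i - N.muAt e (N.tail e) i, Tag.ie)} : MuEntry n)
    else ({(N.muAt e (N.head e), t)} : MuEntry n)
  else
    ({(N.muAt e (N.head e), Tag.te), (N.muAt e (N.tail e), Tag.te)} : MuEntry n)

/-- One μ-entry per root component (indexed by the minimal representative). -/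
def rootEntries (N : Net n) : MuRep n :=
  ((N.V.filter (fun v => N.IsRootClass v ∧ ∀ w ∈ N.V, N.UndirConn v w → v ≤ w)).val).map
    (fun v => ({(N.muFrom v, Tag.rn)} : MuEntry n))

/-- The edge-based μ-representation of `N`. -/
def muRep (N : Net n) : MuRep n :=
  N.E.val.map (fun e => N.muEntryEdge e) + N.rootEntries

end Net

/-! ## Operations on μ-representations -/

variable {n : ℕ}

/-- Multiplicity of a simple μ-vector in a μ-representation: the number of
entries (with multiplicity) containing it. -/
def multVec (μs : MuRep n) (m : MuVec n) : ℕ :=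
  μs.countP (fun ent => ∃ t, (m, t) ∈ ent)

def hasTagged (μs : MuRep n) (mt : MuVec n × Tag) : Prop := ∃ ent ∈ μs, mt ∈ ent

/-- The entry of a simple μ-vector (meaningful when its multiplicity is 1). -/
def entryOf (μs : MuRep n) (m : MuVec n) : MuEntry n :=
  if h : ∃ ent ∈ μs, ∃ t, (m, t) ∈ ent then h.choose else 0

/-- The tag of a simple μ-vector (meaningful when its multiplicity is 1). -/
def tagOf (μs : MuRep n) (m : MuVec n) : Tag :=
  if hasTagged μs (m, Tag.rn) then Tag.rn
  else if hasTagged μs (m, Tag.ie) then Tag.ie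
  else if hasTagged μs (m, Tag.te) then Tag.te
  else Tag.hy

/-- The tagged μ-vectors other than `m` in the entry of `m`. -/
def invParts (μs : MuRep n) (m : MuVec n) : MuEntry n :=
  (entryOf μs m).filter (fun mt => mt.1 ≠ m)

def hasInv (μs : MuRep n) (m : MuVec n) : Prop := invParts μs m ≠ 0

/-- The inverse `m⁻¹` of `m` (meaningful when it exists). -/
def invVec (μs : MuRep n) (m : MuVec n) : MuVec n := ((invParts μs m).toList.headI).1

/-- `(a,b)` is a tree cherry of the μ-representation. -/
def MuTreeCherry (μs : MuRep n) (a b : Fin n) : Prop :=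
  multVec μs (dlt ({a.succ, b.succ} : Finset (Fin (n + 1)))) = 1

/-- Type of a tree cherry of a μ-representation. -/
def muTreeType (μs : MuRep n) (a b : Fin n) : CT :=
  let mab := dlt ({a.succ, b.succ} : Finset (Fin (n + 1)))
  match tagOf μs mab with
  | Tag.rn => CT.r2
  | Tag.ie => CT.r3
  | Tag.te =>
      if (¬ hasInv μs mab) ∨ (∃ mt ∈ invParts μs mab, mt.2 = Tag.ie) then CT.d else CT.u
  | Tag.hy => CT.u

/-- `(a,b)` is a reticulate cherry of the μ-representation. -/
def MuRetCherry (μs : MuRep n) (a b : Fin n) : Prop :=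
  multVec μs (dlt ({0, a.succ} : Finset (Fin (n + 1)))) = 2 ∧
    (multVec μs (dlt ({0, a.succ, b.succ} : Finset (Fin (n + 1)))) = 1 ∨
      (multVec μs (dlt ({0, a.succ, b.succ} : Finset (Fin (n + 1)))) = 2 ∧
        ∀ ent ∈ μs, ∀ t : Tag,
          (dlt ({0, a.succ, b.succ} : Finset (Fin (n + 1))), t) ∈ ent → t = Tag.ie))

/-- Type of a reticulate cherry of a μ-representation. -/
def muRetType (μs : MuRep n) (a b : Fin n) : CT :=
  let mab := dlt ({0, a.succ, b.succ} : Finset (Fin (n + 1)))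
  if multVec μs mab = 2 then CT.r3
  else
    match tagOf μs mab with
    | Tag.rn => CT.r2
    | Tag.ie => CT.r3
    | Tag.te =>
        if (¬ hasInv μs mab) ∨ (∃ mt ∈ invParts μs mab, mt.2 = Tag.ie) then CT.d else CT.u
    | Tag.hy => CT.u

/-- `δ_{0,a,b}⁻¹`, defined as `δ_{0,a}` in the multiplicity-2 (parallel) case. -/
def retInv (μs : MuRep n) (a b : Fin n) : MuVec n :=
  if multVec μs (dlt ({0, a.succ, b.succ} : Finset (Fin (n + 1)))) = 2 then
    dlt ({0, a.succ} : Finset (Fin (n + 1)))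
  else invVec μs (dlt ({0, a.succ, b.succ} : Finset (Fin (n + 1))))

/-- The internal μ-entry of a reticulate cherry `(a,b)` with respect to `μs`. -/
def internalEntry (μs : MuRep n) (a b : Fin n) : MuEntry n :=
  let d0a := dlt ({0, a.succ} : Finset (Fin (n + 1)))
  let d0ab := dlt ({0, a.succ, b.succ} : Finset (Fin (n + 1)))
  if multVec μs d0ab = 1 ∧
      ((¬ hasInv μs d0ab) ∨ (∃ mt ∈ invParts μs d0ab, mt.2 = Tag.ie)) then
    ({(d0a, Tag.hy)} : MuEntry n)
  else
    ({(d0a, Tag.hy), (fun i => d0ab i + retInv μs a b i - d0a i, Tag.ie)} : MuEntry n)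

/-- Remove the whole entry of `m`. -/
def removeEntryOf (μs : MuRep n) (m : MuVec n) : MuRep n := μs.erase (entryOf μs m)

/-- Remove `m⁻¹` from the entry of `m` (keeping `m`). -/
def removeInvOf (μs : MuRep n) (m : MuVec n) : MuRep n :=
  (μs.erase (entryOf μs m)) + {(entryOf μs m).filter (fun mt => mt.1 = m)}

/-- Remove `m` from its entry (keeping the rest of the entry). -/
def removeVecOf (μs : MuRep n) (m : MuVec n) : MuRep n :=
  (μs.erase (entryOf μs m)) + {(entryOf μs m).filter (fun mt => mt.1 ≠ m)}

def entryOfT (μs : MuRep n) (mt : MuVec n × Tag) : MuEntry n :=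
  if h : ∃ ent ∈ μs, mt ∈ ent then h.choose else 0

/-- Remove one occurrence of the tagged μ-vector `mt` from some entry containing it. -/
def removeTaggedOnce (μs : MuRep n) (mt : MuVec n × Tag) : MuRep n :=
  (μs.erase (entryOfT μs mt)) + {(entryOfT μs mt).erase mt}

/-- Change the tag of `m⁻¹` (within the entry of `m`) to `ie`. -/
def retagInvIe (μs : MuRep n) (m : MuVec n) : MuRep n :=
  let ent := entryOf μs m
  (μs.erase ent) +
    {ent.filter (fun mt => mt.1 = m) + (invParts μs m).map (fun mt => (mt.1, Tag.ie))}

/-- Change the tag of one occurrence of the tagged μ-vector `mt` to `t'`. -/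
def retagTaggedTo (μs : MuRep n) (mt : MuVec n × Tag) (t' : Tag) : MuRep n :=
  let ent := entryOfT μs mt
  (μs.erase ent) + {(ent.erase mt) + ({(mt.1, t')} : MuEntry n)}

/-- Apply `f` to every simple μ-vector of every entry. -/
def mapVecs (f : MuVec n → MuVec n) (μs : MuRep n) : MuRep n :=
  μs.map (fun ent => ent.map (fun mt => (f mt.1, mt.2)))

/-- `(m_0, m_a, m_b, …) ↦ (m_0, 0, m_b, …)`. -/
def zeroCoordA (a : Fin n) (m : MuVec n) : MuVec n :=
  fun i => if i = a.succ then 0 else m i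

/-- `(m_0, m_a, m_b, …) ↦ (m_0 − m_a, m_a − m_b, m_b, …)`. -/
def retAdj (a b : Fin n) (m : MuVec n) : MuVec n :=
  fun i => if i = 0 then m 0 - m a.succ else if i = a.succ then m a.succ - m b.succ else m i

/-- Reduction of a tree cherry `(a,b)` on a μ-representation. -/
def muReduceTree (μs : MuRep n) (a b : Fin n) : MuRep n :=
  let dab := dlt ({a.succ, b.succ} : Finset (Fin (n + 1)))
  let da := dlt ({a.succ} : Finset (Fin (n + 1)))
  let db := dlt ({b.succ} : Finset (Fin (n + 1)))
  let μ1 :=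
    match muTreeType μs a b with
    | CT.r2 => removeEntryOf μs db
    | CT.d => removeEntryOf μs db
    | CT.r3 => removeVecOf (removeInvOf μs db) dab
    | CT.u => retagInvIe (removeEntryOf μs db) dab
  let μ2 := removeEntryOf μ1 da
  mapVecs (zeroCoordA a) μ2

/-- Reduction of a reticulate cherry `(a,b)` on a μ-representation. -/
def muReduceRet (μs : MuRep n) (a b : Fin n) : MuRep n :=
  let d0a := dlt ({0, a.succ} : Finset (Fin (n + 1)))
  let d0ab := dlt ({0, a.succ, b.succ} : Finset (Fin (n + 1)))
  let da := dlt ({a.succ} : Finset (Fin (n + 1)))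
  let db := dlt ({b.succ} : Finset (Fin (n + 1)))
  let intEnt := internalEntry μs a b
  let μ1 :=
    match muRetType μs a b with
    | CT.r2 => removeEntryOf μs db
    | CT.d => removeEntryOf μs db
    | CT.r3 => removeTaggedOnce (removeInvOf μs db) (d0ab, Tag.ie)
    | CT.u => retagInvIe (removeEntryOf μs db) d0ab
  let μ2 := removeEntryOf μ1 da
  let μ3 := μ2.erase intEnt
  let μ4 := retagTaggedTo μ3 (d0a, Tag.hy) Tag.te
  mapVecs (retAdj a b) μ4

/-- Reduction of a cherry `(a,b)` on a μ-representation. -/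
def muReduceCherry (μs : MuRep n) (a b : Fin n) : MuRep n :=
  if MuTreeCherry μs a b then muReduceTree μs a b
  else if MuRetCherry μs a b then muReduceRet μs a b
  else μs

/-! ## Cherries and reductions on networks -/

namespace Net

/-- The node labelled `a` (meaningful when it exists). -/
def labelNode (N : Net n) (a : Fin n) : ℕ :=
  ((N.V.filter (fun x => N.lbl x = some a)).sort (· ≤ ·)).headI

def inEdges (N : Net n) (x : ℕ) : Finset ℕ :=
  N.E.filter (fun e => N.dir e = true ∧ N.head e = x)

/-- The parent of `x` (meaningful when `x` has in-degree 1). -/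
def parentOf (N : Net n) (x : ℕ) : ℕ :=
  N.tail (((N.inEdges x).sort (· ≤ ·)).headI)

def IsParentOf (N : Net n) (p x : ℕ) : Prop :=
  ∃ e ∈ N.E, N.dir e = true ∧ N.tail e = p ∧ N.head e = x

/-- `(a,b)` is a tree cherry of `N`. -/
def TreeCherry (N : Net n) (a b : Fin n) : Prop :=
  ∃ x y p, N.HasLeaf a x ∧ N.HasLeaf b y ∧ x ≠ y ∧ N.IsParentOf p x ∧ N.IsParentOf p y

/-- `(a,b)` is a reticulate cherry of `N`. -/
def RetCherry (N : Net n) (a b : Fin n) : Prop :=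
  ∃ x y pa pb, N.HasLeaf a x ∧ N.HasLeaf b y ∧ x ≠ y ∧
    N.IsParentOf pa x ∧ N.IsHybrid pa ∧ N.IsParentOf pb y ∧ N.IsParentOf pb pa

def IsCherry (N : Net n) (a b : Fin n) : Prop := N.TreeCherry a b ∨ N.RetCherry a b

/-- The type of a cherry `(a,b)`, read off from the parent of `b`. -/
def cherryType (N : Net n) (a b : Fin n) : CT :=
  let pb := N.parentOf (N.labelNode b)
  if N.IsRootNode pb ∧ N.deg pb = 2 then CT.r2
  else if N.IsRootNode pb ∧ N.deg pb = 3 then CT.r3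
  else if 0 < N.undeg pb then CT.u
  else CT.d

def incE (N : Net n) (v : ℕ) : Finset ℕ :=
  N.E.filter (fun e => N.tail e = v ∨ N.head e = v)

/-- A node is suppressible (Def. of node suppression). -/
def Suppressible (N : Net n) (v : ℕ) : Prop :=
  N.lbl v = none ∧
    ((N.deg v = 2 ∧ ¬ N.IsRootNode v) ∨
      (N.deg v = 1 ∧ N.IsRootNode v ∧ ∀ e ∈ N.incE v, ¬ N.IsHybrid (N.head e)))

/-- Replace the two edges `e1`, `e2` at `v` by the single edge (named `e1`)
from `p` to `c`, directed iff `d`. -/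
def replaceEdge (N : Net n) (v e1 e2 p c : ℕ) (d : Bool) : Net n :=
  { V := N.V.erase v
    E := N.E.erase e2
    tail := Function.update N.tail e1 p
    head := Function.update N.head e1 c
    dir := Function.update N.dir e1 d
    lbl := N.lbl }

/-- Suppress a (suppressible) node of degree 1 or 2. -/
def suppress (N : Net n) (v : ℕ) : Net n :=
  match (N.incE v).sort (· ≤ ·) with
  | [e] => { N with V := N.V.erase v, E := N.E.erase e }
  | [e1, e2] =>
      let o1 := if N.tail e1 = v then N.head e1 else N.tail e1
      let o2 := if N.tail e2 = v then N.head e2 else N.tail e2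
      if N.dir e1 = true ∧ N.tail e1 = v then N.replaceEdge v e1 e2 o2 o1 true
      else if N.dir e2 = true ∧ N.tail e2 = v then N.replaceEdge v e1 e2 o1 o2 true
      else if N.dir e1 = true then N.replaceEdge v e1 e2 o1 o2 true
      else if N.dir e2 = true then N.replaceEdge v e1 e2 o2 o1 true
      else N.replaceEdge v e1 e2 o1 o2 false
  | _ => N

def suppressIf (N : Net n) (v : ℕ) : Net n := if N.Suppressible v then N.suppress v else N

/-- Delete the leaf `x` and its incident edge(s). -/
def deleteLeaf (N : Net n) (x : ℕ) : Net n :=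
  { V := N.V.erase x
    E := N.E \ N.incE x
    tail := N.tail
    head := N.head
    dir := N.dir
    lbl := Function.update N.lbl x none }

/-- Reduction of a tree cherry `(a,b)`. -/
def reduceTree (N : Net n) (a b : Fin n) : Net n :=
  let x := N.labelNode a
  let p := N.parentOf x
  (N.deleteLeaf x).suppressIf p

/-- Reduction of a reticulate cherry `(a,b)`: delete the internal hybrid edge,
suppress `p_b` if suppressible, then suppress `p_a`. -/
def reduceRet (N : Net n) (a b : Fin n) : Net n :=
  let x := N.labelNode a
  let y := N.labelNode b
  let pa := N.parentOf x
  let pb := N.parentOf y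
  let eint :=
    ((N.E.filter (fun e => N.dir e = true ∧ N.tail e = pb ∧ N.head e = pa)).sort (· ≤ ·)).headI
  let N1 : Net n := { N with E := N.E.erase eint }
  ((N1.suppressIf pb).suppress pa)

/-- Reduction of the cherry `(a,b)` in `N`, written `N^{(a,b)}`. -/
def reduceCherry (N : Net n) (a b : Fin n) : Net n :=
  if N.TreeCherry a b then N.reduceTree a b
  else if N.RetCherry a b then N.reduceRet a b
  else N

def reduceSeq (N : Net n) (S : List (Fin n × Fin n)) : Net n :=
  S.foldl (fun M s => M.reduceCherry s.1 s.2) N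

def IsRedSeq : Net n → List (Fin n × Fin n) → Prop
  | _, [] => True
  | N, s :: S => N.IsCherry s.1 s.2 ∧ IsRedSeq (N.reduceCherry s.1 s.2) S

/-- `N` is the trivial forest on `L0`: isolated nodes labelled bijectively by `L0`. -/
def IsTrivialForest (N : Net n) (L0 : Finset (Fin n)) : Prop :=
  N.E = ∅ ∧ (∀ v ∈ N.V, ∃ a ∈ L0, N.lbl v = some a) ∧
    (∀ a ∈ L0, ∃ v ∈ N.V, N.lbl v = some a)

/-- `N` is orchard: some cherry reduction sequence reduces it to a trivial forest. -/
def Orchard (N : Net n) : Prop :=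
  ∃ S L0, N.IsRedSeq S ∧ (N.reduceSeq S).IsTrivialForest L0

def freshV (N : Net n) : ℕ := N.V.sup id + 1
def freshE (N : Net n) : ℕ := N.E.sup id + 1

/-- Addition of the cherry `(a,b)` of kind `k` to `N` (identity if conditions fail). -/
def addCherry (N : Net n) (a b : Fin n) (k : CherryKind) : Net n :=
  let y := N.labelNode b
  let w := N.parentOf y
  let ewb := ((N.inEdges y).sort (· ≤ ·)).headI
  let va := N.freshV
  let vpb := N.freshV + 1
  let e1 := N.freshE
  let e2 := N.freshE + 1
  let x := N.labelNode a
  let pa := N.parentOf x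
  let isolated : Prop := y ∈ N.V ∧ N.deg y = 0 ∧ (N.lbl y).isSome
  let nonIsolated : Prop := y ∈ N.V ∧ N.deg y ≠ 0 ∧ (N.lbl y).isSome
  let resolvedRoot : Prop := N.IsRootNode w ∧ N.deg w = 2
  let aLeaf : Prop := ∃ xx, N.HasLeaf a xx
  match k with
  | CherryKind.Tr2 =>
      if isolated then
        { V := insert vpb (insert va N.V)
          E := insert e2 (insert e1 N.E)
          tail := Function.update (Function.update N.tail e1 vpb) e2 vpb
          head := Function.update (Function.update N.head e1 va) e2 y
          dir := Function.update (Function.update N.dir e1 true) e2 true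
          lbl := Function.update N.lbl va (some a) }
      else N
  | CherryKind.Tr3 =>
      if nonIsolated ∧ resolvedRoot then
        { V := insert va N.V
          E := insert e1 N.E
          tail := Function.update N.tail e1 w
          head := Function.update N.head e1 va
          dir := Function.update N.dir e1 true
          lbl := Function.update N.lbl va (some a) }
      else N
  | CherryKind.Td =>
      if nonIsolated ∧ ¬ resolvedRoot then
        { V := insert vpb (insert va N.V)
          E := insert e2 (insert e1 N.E)
          tail := Function.update (Function.update N.tail e1 vpb) e2 vpb
          head :=
            Function.update (Function.update (Function.update N.head ewb vpb) e1 va) e2 y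
          dir := Function.update (Function.update N.dir e1 true) e2 true
          lbl := Function.update N.lbl va (some a) }
      else N
  | CherryKind.Tu =>
      if nonIsolated ∧ ¬ resolvedRoot then
        { V := insert vpb (insert va N.V)
          E := insert e2 (insert e1 N.E)
          tail := Function.update (Function.update N.tail e1 vpb) e2 vpb
          head :=
            Function.update (Function.update (Function.update N.head ewb vpb) e1 va) e2 y
          dir :=
            Function.update (Function.update (Function.update N.dir ewb false) e1 true) e2 true
          lbl := Function.update N.lbl va (some a) }
      else N
  | CherryKind.Rr2 =>
      if aLeaf ∧ isolated then
        { V := insert vpb N.V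
          E := insert e2 (insert e1 N.E)
          tail := Function.update (Function.update N.tail e1 vpb) e2 vpb
          head := Function.update (Function.update N.head e1 pa) e2 y
          dir := Function.update (Function.update N.dir e1 true) e2 true
          lbl := N.lbl }
      else N
  | CherryKind.Rr3 =>
      if aLeaf ∧ nonIsolated ∧ resolvedRoot then
        { V := N.V
          E := insert e1 N.E
          tail := Function.update N.tail e1 w
          head := Function.update N.head e1 pa
          dir := Function.update N.dir e1 true
          lbl := N.lbl }
      else N
  | CherryKind.Rd =>
      if aLeaf ∧ nonIsolated ∧ ¬ resolvedRoot then
        { V := insert vpb N.V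
          E := insert e2 (insert e1 N.E)
          tail := Function.update (Function.update N.tail e1 vpb) e2 vpb
          head :=
            Function.update (Function.update (Function.update N.head ewb vpb) e1 pa) e2 y
          dir := Function.update (Function.update N.dir e1 true) e2 true
          lbl := N.lbl }
      else N
  | CherryKind.Ru =>
      if aLeaf ∧ nonIsolated ∧ ¬ resolvedRoot then
        { V := insert vpb N.V
          E := insert e2 (insert e1 N.E)
          tail := Function.update (Function.update N.tail e1 vpb) e2 vpb
          head :=
            Function.update (Function.update (Function.update N.head ewb vpb) e1 pa) e2 y
          dir :=
            Function.update (Function.update (Function.update N.dir ewb false) e1 true) e2 true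
          lbl := N.lbl }
      else N

/-- Isomorphism of leaf-labelled semidirected networks. -/
def Isom (N M : Net n) : Prop :=
  ∃ f g : ℕ → ℕ,
    Set.InjOn f ↑N.V ∧ N.V.image f = M.V ∧
    Set.InjOn g ↑N.E ∧ N.E.image g = M.E ∧
    (∀ e ∈ N.E, M.dir (g e) = N.dir e) ∧
    (∀ e ∈ N.E, N.dir e = true →
      M.tail (g e) = f (N.tail e) ∧ M.head (g e) = f (N.head e)) ∧
    (∀ e ∈ N.E, N.dir e = false →
      (M.tail (g e) = f (N.tail e) ∧ M.head (g e) = f (N.head e)) ∨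
        (M.tail (g e) = f (N.head e) ∧ M.head (g e) = f (N.tail e))) ∧
    (∀ v ∈ N.V, M.lbl (f v) = N.lbl v)

/-- `N` is a (complete binary) `L`-network. -/
def Good (N : Net n) : Prop := N.IsLNetwork ∧ N.IsBinary ∧ N.IsComplete

/-- The edge-based μ-dissimilarity: size of the symmetric difference of the
multisets of μ-entries. -/
def dmu (N M : Net n) : ℕ := ((N.muRep - M.muRep) + (M.muRep - N.muRep)).card

/-- `(a,b)` is a reticulate cherry of `N` whose internal and external hybrid
edges are parallel. -/
def ParallelRet (N : Net n) (a b : Fin n) : Prop :=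
  ∃ x y pa pb hi he, N.HasLeaf a x ∧ N.HasLeaf b y ∧
    N.IsParentOf pa x ∧ N.IsHybrid pa ∧ N.IsParentOf pb y ∧
    hi ≠ he ∧ hi ∈ N.E ∧ he ∈ N.E ∧ N.dir hi = true ∧ N.dir he = true ∧
    N.tail hi = pb ∧ N.head hi = pa ∧ N.tail he = pb ∧ N.head he = pa

end Net

/-! A path from `u` through an edge `e` at `u` must leave `u` along `e`, and conversely, by
acyclicity, leaving `u` along `e` and continuing on any path that avoids `e` gives a path. So
`m(u,x) = m(u,x;e) + m(v,x;e)` for `e = uv`, and the left side depends only on the undirected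
component of `u`, because an undirected edge `uw` gives `m(u,x) = m(u,x;e) + m(w,x;e) = m(w,x)`. -/

namespace Net

variable {n : ℕ} {N : Net n}

lemma chain_append {l₁ l₂ : List (ℕ × Bool)} {u x : ℕ} :
    N.chain u (l₁ ++ l₂) x ↔ ∃ w, N.chain u l₁ w ∧ N.chain w l₂ x := by
  induction l₁ generalizing u with
  | nil => simp [chain]
  | cons s l ih => simp [chain, ih, and_assoc]

lemma fst_mem_of_chain {p : List (ℕ × Bool)} {u x : ℕ} (h : N.chain u p x) {t : ℕ × Bool}
    (ht : t ∈ p) : t.1 ∈ N.E := by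
  induction p generalizing u with
  | nil => simp at ht
  | cons s p ih =>
    obtain rfl | ht := List.mem_cons.1 ht
    exacts [h.1.1, ih h.2 ht]

lemma src_mem_of_chain {p : List (ℕ × Bool)} {u x : ℕ} (h : N.chain u p x) {t : ℕ × Bool}
    (ht : t ∈ p) : N.src t ∈ u :: p.map N.dst := by
  induction p generalizing u with
  | nil => simp at ht
  | cons s p ih =>
    obtain rfl | ht := List.mem_cons.1 ht
    · simp [h.1.2.2]
    · simpa using Or.inr (ih h.2 ht)

lemma eq_or_dst_eq_src_of_fst_eq (N : Net n) {s t : ℕ × Bool} (h : t.1 = s.1) :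
    t = s ∨ N.dst t = N.src s := by
  obtain ⟨e, b⟩ := s
  obtain ⟨e', c⟩ := t
  obtain rfl : e' = e := h
  cases b <;> cases c <;> simp [src, dst]

lemma isPath_cons {u x : ℕ} {s : ℕ × Bool} {q : List (ℕ × Bool)} (hv : N.dst s ∈ N.V) :
    N.IsPath u x (s :: q) ↔
      u ∈ N.V ∧ N.stepOK u s ∧ u ∉ N.dst s :: q.map N.dst ∧ N.IsPath (N.dst s) x q := by
  simp only [IsPath, chain, List.nodup_cons (a := u), ← List.map_cons]
  tauto

lemma map_fst_nodup_of_chain {p : List (ℕ × Bool)} {u x : ℕ} (h : N.chain u p x)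
    (hnd : (u :: p.map N.dst).Nodup) : (p.map Prod.fst).Nodup := by
  induction p generalizing u with
  | nil => simp
  | cons s p ih =>
    have hnd' : (N.dst s :: p.map N.dst).Nodup := by simpa using hnd.of_cons
    refine List.nodup_cons.2 ⟨fun hmem => ?_, ih h.2 hnd'⟩
    obtain ⟨t, ht, hts⟩ := List.mem_map.1 hmem
    rcases N.eq_or_dst_eq_src_of_fst_eq hts with rfl | hdst
    · exact (List.nodup_cons.1 hnd').1 (List.mem_map_of_mem ht)
    · exact (List.nodup_cons.1 hnd).1 (by simp [← h.1.2.2, ← hdst, List.mem_map_of_mem ht])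

lemma finite_setOf_nodup_of_forall_mem {α : Type*} (s : Finset α) :
    {l : List α | l.Nodup ∧ ∀ a ∈ l, a ∈ s}.Finite := by
  refine (s.toList.sublists.flatMap List.permutations).finite_toSet.subset ?_
  rintro l ⟨hnd, hs⟩
  obtain ⟨l', hperm, hsub⟩ := List.subperm_of_subset hnd fun a ha => Finset.mem_toList.2 (hs a ha)
  exact List.mem_flatMap.2 ⟨l', List.mem_sublists.2 hsub, List.mem_permutations.2 hperm.symm⟩

lemma paths_finite (N : Net n) (u x : ℕ) : (N.paths u x).Finite :=
  (finite_setOf_nodup_of_forall_mem (N.E ×ˢ Finset.univ)).subset fun _ ⟨_, hch, hnd⟩ =>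
    ⟨hnd.of_cons.of_map _, fun _ ht => by simpa using fst_mem_of_chain hch ht⟩

lemma exists_eq_cons_of_isPath {u x : ℕ} {s : ℕ × Bool} {p : List (ℕ × Bool)}
    (hp : N.IsPath u x p) (hs : N.stepOK u s) (hmem : s.1 ∈ p.map Prod.fst) :
    ∃ q, p = s :: q := by
  obtain ⟨t, ht, hts⟩ := List.mem_map.1 hmem
  have hu : u ∉ p.map N.dst := (List.nodup_cons.1 hp.2.2).1
  obtain rfl : t = s := by
    refine (N.eq_or_dst_eq_src_of_fst_eq hts).resolve_right fun hdst => hu ?_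
    rw [← hs.2.2, ← hdst]
    exact List.mem_map_of_mem ht
  cases p with
  | nil => simp at ht
  | cons t q =>
    obtain rfl | ht := List.mem_cons.1 ht
    · exact ⟨q, rfl⟩
    · exact absurd (by simpa [hs.2.2] using src_mem_of_chain hp.2.1.2 ht) hu

/-- If `u` recurred, `s` followed by the part of the path up to that point would be a cycle. -/
lemma Acyclic.not_mem_of_isPath {u x : ℕ} {s : ℕ × Bool} {q : List (ℕ × Bool)}
    (hac : N.Acyclic) (hs : N.stepOK u s) (hq : N.IsPath (N.dst s) x q)
    (hav : s.1 ∉ q.map Prod.fst) : u ∉ N.dst s :: q.map N.dst := by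
  intro hmem
  obtain ⟨q₁, hq₁, hsub⟩ : ∃ q₁, N.chain (N.dst s) q₁ u ∧ q₁.Sublist q := by
    rcases List.mem_cons.1 hmem with h | h
    · exact ⟨[], h.symm, List.nil_sublist q⟩
    obtain ⟨t, ht, rfl⟩ := List.mem_map.1 h
    obtain ⟨l₁, l₂, rfl⟩ := List.append_of_mem ht
    obtain ⟨w, hw₁, hw₂⟩ := chain_append.1 hq.2.1
    exact ⟨l₁ ++ [t], chain_append.2 ⟨w, hw₁, hw₂.1, rfl⟩,
      (List.singleton_sublist.2 List.mem_cons_self).append_left l₁⟩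
  have hnd : (N.dst s :: q₁.map N.dst).Nodup :=
    ((hsub.map N.dst).cons_cons _).nodup hq.2.2
  refine hac (s :: q₁) ⟨u, List.cons_ne_nil _ _, ⟨hs, hq₁⟩, by simpa using hnd, ?_⟩
  exact List.nodup_cons.2 ⟨fun h => hav ((hsub.map _).subset h),
    map_fst_nodup_of_chain hq₁ hnd⟩

lemma paths_inter_setOf_mem_eq_image {u x : ℕ} {s : ℕ × Bool} (hac : N.Acyclic)
    (hv : N.dst s ∈ N.V) (hu : u ∈ N.V) (hs : N.stepOK u s) :
    N.paths u x ∩ {p | s.1 ∈ p.map Prod.fst} = List.cons s '' N.pathsAvoid (N.dst s) x s.1 := by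
  ext p
  constructor
  · rintro ⟨hp, hmem⟩
    obtain ⟨q, rfl⟩ := exists_eq_cons_of_isPath hp hs hmem
    refine ⟨q, ⟨((isPath_cons hv).1 hp).2.2.2, ?_⟩, rfl⟩
    exact (List.nodup_cons.1 (map_fst_nodup_of_chain hp.2.1 hp.2.2)).1
  · rintro ⟨q, ⟨hq, hav⟩, rfl⟩
    exact ⟨(isPath_cons hv).2 ⟨hu, hs, hac.not_mem_of_isPath hs hq hav, hq⟩,
      List.mem_map_of_mem List.mem_cons_self⟩

lemma m_eq_mAvoid_add_mAvoid {u : ℕ} {s : ℕ × Bool} (hac : N.Acyclic) (hu : u ∈ N.V)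
    (hv : N.dst s ∈ N.V) (hs : N.stepOK u s) (x : ℕ) :
    N.m u x = N.mAvoid u x s.1 + N.mAvoid (N.dst s) x s.1 := by
  rw [m, ← Set.ncard_inter_add_ncard_sdiff_eq_ncard (N.paths u x) {p | s.1 ∈ p.map Prod.fst}
      (N.paths_finite u x), paths_inter_setOf_mem_eq_image hac hv hu hs,
    Set.ncard_image_of_injective _ List.cons_injective, add_comm]
  rfl

lemma m_eq_of_ustep (hN : N.IsLNetwork) {u w : ℕ} (h : N.ustep u w) (x : ℕ) :
    N.m u x = N.m w x := by
  suffices key : ∀ e ∈ N.E, N.dir e = false → N.m (N.tail e) x = N.m (N.head e) x by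
    obtain ⟨e, he, hdir, ⟨rfl, rfl⟩ | ⟨rfl, rfl⟩⟩ := h
    exacts [key e he hdir, (key e he hdir).symm]
  intro e he hdir
  have hundir : ∀ b, N.dir e = true → b = true := by simp [hdir]
  rw [m_eq_mAvoid_add_mAvoid (s := (e, true)) hN.acyclic (hN.wfT e he) (hN.wfH e he)
      ⟨he, hundir true, rfl⟩,
    m_eq_mAvoid_add_mAvoid (s := (e, false)) hN.acyclic (hN.wfH e he) (hN.wfT e he)
      ⟨he, hundir false, rfl⟩]
  exact add_comm _ _

lemma mToLbl_eq_of_undirConn (hN : N.IsLNetwork) {u v : ℕ} (h : N.UndirConn u v) (a : Fin n) :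
    N.mToLbl u a = N.mToLbl v a := by
  induction h with
  | refl => rfl
  | tail _ hw ih => exact ih.trans (Finset.sum_congr rfl fun x _ => m_eq_of_ustep hN hw x)

lemma mToLblAvoid_head_add_mToLblAvoid_tail (hN : N.IsLNetwork) {e : ℕ} (he : e ∈ N.E)
    (a : Fin n) :
    N.mToLblAvoid (N.head e) a e + N.mToLblAvoid (N.tail e) a e = N.mToLbl (N.tail e) a := by
  rw [mToLblAvoid, mToLblAvoid, mToLbl, ← Finset.sum_add_distrib]
  refine Finset.sum_congr rfl fun x _ => ?_
  rw [m_eq_mAvoid_add_mAvoid (s := (e, true)) hN.acyclic (hN.wfT e he) (hN.wfH e he)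
    ⟨he, fun _ => rfl, rfl⟩ x, add_comm]
  rfl

end Net

theorem stmt4_general {n : ℕ} (N : Net n) (hN : N.IsLNetwork) (v0 : ℕ) (e1 e2 : ℕ)
    (h1 : N.AdmFor v0 e1) (h2 : N.AdmFor v0 e2) :
    ∀ i : Fin n,
      N.mToLblAvoid (N.head e1) i e1 + N.mToLblAvoid (N.tail e1) i e1 =
        N.mToLblAvoid (N.head e2) i e2 + N.mToLblAvoid (N.tail e2) i e2 := by
  intro i
  rw [Net.mToLblAvoid_head_add_mToLblAvoid_tail hN h1.1,
    Net.mToLblAvoid_head_add_mToLblAvoid_tail hN h2.1,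
    Net.mToLbl_eq_of_undirConn hN h1.2, Net.mToLbl_eq_of_undirConn hN h2.2]

/-- Lemma 2: for a root component `T` (of `v0`) with admissible
edges, the vector `i ↦ m(v,i;e) + m(u,i;e)` (for `e = uv ∈ adm(T)` with `u ∈ T`)
does not depend on the choice of admissible edge `e`. -/
theorem stmt4 {n : ℕ} (N : Net n) (hN : N.IsLNetwork) (v0 : ℕ)
    (hroot : N.IsRootClass v0) (e1 e2 : ℕ)
    (h1 : N.AdmFor v0 e1) (h2 : N.AdmFor v0 e2) :
    ∀ i : Fin n,
      N.mToLblAvoid (N.head e1) i e1 + N.mToLblAvoid (N.tail e1) i e1 =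
        N.mToLblAvoid (N.head e2) i e2 + N.mToLblAvoid (N.tail e2) i e2 :=
  stmt4_general N hN v0 e1 e2 h1 h2

end
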